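/- Let n ≥ 2, y₀ ∈ ℝⁿ, 0 < r₁ < r₂, and let η : (r₁, r₂) → [0,∞] be a Lebesgue measurable function with ∫_{r₁}^{r₂} η(r) dr ≥ 1. Define ρ : ℝⁿ → [0,∞] by ρ(y) = η(|y−y₀|) for y in the annulus A(y₀, r₁, r₂) and ρ(y) = 0 otherwise. Then for every locally rectifiable path γ : [a, b] → ℝⁿ with γ(a) ∈ S(y₀, r₁), γ(b) ∈ S(y₀, r₂) and γ(t) ∈ A(y₀, r₁, r₂) for t ∈ (a, b), the arc-length integral satisfies ∫_γ ρ ds ≥ ∫_{r₁}^{r₂} η(r) dr ≥ 1; that is, ρ is admissible for the family Γ(S(y₀, r₁), S(y₀, r₂), A(y₀, r₁, r₂)). -/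

import Mathlib

open MeasureTheory Metric Set Filter Topology
open scoped ENNReal NNReal

noncomputable section
open scoped Classical

/-- The (clamped) total-variation function of `γ` on `[a, b]`. -/
def varFun (n : ℕ) (γ : ℝ → EuclideanSpace ℝ (Fin n)) (a b t : ℝ) : ℝ :=
  (eVariationOn γ (Set.Icc a (max a (min t b)))).toReal

/-- The arc-length (Lebesgue–Stieltjes) integral `∫_γ ρ ds` of a Borel function
`ρ : ℝⁿ → [0,∞]` along the path `γ : [a, b] → ℝⁿ`, defined via the Lebesgue–Stieltjes
measure associated to the arc-length (variation) function of `γ`.  It is `∞` when `γ`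
is not rectifiable. -/
def arcIntegral (n : ℕ) (ρ : EuclideanSpace ℝ (Fin n) → ℝ≥0∞)
    (γ : ℝ → EuclideanSpace ℝ (Fin n)) (a b : ℝ) : ℝ≥0∞ :=
  if h : BoundedVariationOn γ (Set.Icc a b) ∧ Monotone (varFun n γ a b) then
    ∫⁻ t in Set.Icc a b, ρ (γ t) ∂h.2.stieltjesFunction.measure
  else ∞

/-- A (continuous) path in `ℝⁿ` defined on a compact interval `[a, b]`. -/
structure PathOn (n : ℕ) where
  a : ℝ
  b : ℝ
  hab : a ≤ b
  toFun : ℝ → EuclideanSpace ℝ (Fin n)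
  cont : ContinuousOn toFun (Set.Icc a b)

/-- A Borel function `ρ : ℝⁿ → [0,∞]` is admissible for a family `Γ` of paths if
`∫_γ ρ ds ≥ 1` for every (locally rectifiable) path `γ ∈ Γ`. -/
def IsAdmissibleFor (n : ℕ) (ρ : EuclideanSpace ℝ (Fin n) → ℝ≥0∞)
    (Γ : Set (PathOn n)) : Prop :=
  Measurable ρ ∧ ∀ γ ∈ Γ, 1 ≤ arcIntegral n ρ γ.toFun γ.a γ.b

/-- The (conformal) modulus `M(Γ)` of a family of paths in `ℝⁿ`. -/
def modulus (n : ℕ) (Γ : Set (PathOn n)) : ℝ≥0∞ :=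
  ⨅ (ρ : EuclideanSpace ℝ (Fin n) → ℝ≥0∞) (_ : IsAdmissibleFor n ρ Γ),
    ∫⁻ x, ρ x ^ n

/-- The spherical annulus `A(y₀, r₁, r₂) = {y : r₁ < |y − y₀| < r₂}`. -/
def annulus (n : ℕ) (y₀ : EuclideanSpace ℝ (Fin n)) (r₁ r₂ : ℝ) :
    Set (EuclideanSpace ℝ (Fin n)) :=
  {y | r₁ < dist y y₀ ∧ dist y y₀ < r₂}

/-- `Γ(E, F, G)`: the family of all paths `γ : [a,b] → ℝⁿ` with `γ(a) ∈ E`,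
`γ(b) ∈ F` and `γ(t) ∈ G` for `t ∈ (a, b)`. -/
def pathsBetween (n : ℕ) (E F G : Set (EuclideanSpace ℝ (Fin n))) : Set (PathOn n) :=
  {γ | γ.toFun γ.a ∈ E ∧ γ.toFun γ.b ∈ F ∧ ∀ t ∈ Set.Ioo γ.a γ.b, γ.toFun t ∈ G}

/-- `Γ_f(y₀, r₁, r₂)`: the family of all paths `γ` in `D` such that
`f ∘ γ ∈ Γ(S(y₀,r₁), S(y₀,r₂), A(y₀,r₁,r₂))`. -/
def liftedFamily (n : ℕ) (D : Set (EuclideanSpace ℝ (Fin n)))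
    (f : EuclideanSpace ℝ (Fin n) → EuclideanSpace ℝ (Fin n))
    (y₀ : EuclideanSpace ℝ (Fin n)) (r₁ r₂ : ℝ) : Set (PathOn n) :=
  {γ | (∀ t ∈ Set.Icc γ.a γ.b, γ.toFun t ∈ D) ∧
    f (γ.toFun γ.a) ∈ Metric.sphere y₀ r₁ ∧ f (γ.toFun γ.b) ∈ Metric.sphere y₀ r₂ ∧
    ∀ t ∈ Set.Ioo γ.a γ.b, f (γ.toFun t) ∈ annulus n y₀ r₁ r₂}

/-- `f` satisfies the inverse Poletsky inequality at `y₀` with majorant `Q`. -/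
def InvPoletsky (n : ℕ) (D : Set (EuclideanSpace ℝ (Fin n)))
    (f : EuclideanSpace ℝ (Fin n) → EuclideanSpace ℝ (Fin n))
    (Q : EuclideanSpace ℝ (Fin n) → ℝ≥0∞) (y₀ : EuclideanSpace ℝ (Fin n)) : Prop :=
  ∃ r₀ > (0 : ℝ), ∀ r₁ r₂ : ℝ, 0 < r₁ → r₁ < r₂ → r₂ < r₀ →
    ∀ η : ℝ → ℝ≥0∞, Measurable η → 1 ≤ ∫⁻ r in Set.Ioo r₁ r₂, η r →
      modulus n (liftedFamily n D f y₀ r₁ r₂) ≤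
        ∫⁻ y in (f '' D) ∩ annulus n y₀ r₁ r₂, Q y * η (dist y y₀) ^ n

/-- `f` is discrete on `D`: every fiber has no accumulation point in `D`. -/
def IsDiscreteOn (n : ℕ) (D : Set (EuclideanSpace ℝ (Fin n)))
    (f : EuclideanSpace ℝ (Fin n) → EuclideanSpace ℝ (Fin n)) : Prop :=
  ∀ y, ∀ x ∈ D, ¬ AccPt x (Filter.principal {z | z ∈ D ∧ f z = y})

/-- `f` is open on `D`: the image of every open subset of `D` is open. -/
def IsOpenOn (n : ℕ) (D : Set (EuclideanSpace ℝ (Fin n)))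
    (f : EuclideanSpace ℝ (Fin n) → EuclideanSpace ℝ (Fin n)) : Prop :=
  ∀ U : Set (EuclideanSpace ℝ (Fin n)), IsOpen U → U ⊆ D → IsOpen (f '' U)

/-- The chordal (spherical) metric `h(x,y) = |x−y|/(√(1+|x|²)·√(1+|y|²))`. -/
def chordal (n : ℕ) (x y : EuclideanSpace ℝ (Fin n)) : ℝ :=
  dist x y / (Real.sqrt (1 + ‖x‖ ^ 2) * Real.sqrt (1 + ‖y‖ ^ 2))

/-- A family of mappings of `D` is equicontinuous at `x₀ ∈ D` w.r.t. the chordal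
metric on the target. -/
def EquicontinuousAtPt (n : ℕ) (D : Set (EuclideanSpace ℝ (Fin n)))
    (𝓕 : Set (EuclideanSpace ℝ (Fin n) → EuclideanSpace ℝ (Fin n)))
    (x₀ : EuclideanSpace ℝ (Fin n)) : Prop :=
  ∀ ε > (0 : ℝ), ∃ δ > (0 : ℝ), ∀ f ∈ 𝓕, ∀ x ∈ D, dist x x₀ < δ →
    chordal n (f x) (f x₀) < ε


/-! Let `u(t) = |γ(t) − y₀|` and let `M(t) = max_{[a,t]} u` be its running maximum. For a level
`r ∈ (r₁, r₂)` the first time `τ(r)` at which `u` reaches `r` satisfies `τ(r) ≤ t ↔ r ≤ M(t)`,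
so `τ` pushes Lebesgue measure on `(r₁, r₂)` forward to the Lebesgue–Stieltjes measure `dM`.
The running maximum grows no faster than the arc length `s(t)` of `γ`, hence `dM ≤ ds`, and
since `ρ(γ(τ(r))) = η(r)` this gives `∫ η dr = ∫ ρ ∘ γ dM ≤ ∫_γ ρ ds`. -/

namespace StieltjesFunction

theorem measure_le_of_sub_le {f g : StieltjesFunction ℝ}
    (h : ∀ s t, s ≤ t → f t - f s ≤ g t - g s) : f.measure ≤ g.measure := by
  let d : StieltjesFunction ℝ :=
    ⟨fun x => g x - f x, fun s t hst => by linarith [h s t hst],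
      fun x => (g.right_continuous x).sub (f.right_continuous x)⟩
  have hfd : f + d = g := by ext x; simp [d]
  rw [← hfd, measure_add]
  exact Measure.le_add_right le_rfl

theorem measure_le_stieltjesFunction_measure (f : StieltjesFunction ℝ) {F : ℝ → ℝ}
    (hF : Monotone F) (h : ∀ s t, s ≤ t → f t - f s ≤ F t - F s) :
    f.measure ≤ hF.stieltjesFunction.measure := by
  refine measure_le_of_sub_le fun s t hst => ?_
  rcases hst.eq_or_lt with rfl | hlt
  · simp
  refine le_of_tendsto (((f.right_continuous s).mono Ioi_subset_Ici_self).const_sub (f t)) ?_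
  filter_upwards [Ioc_mem_nhdsGT hlt] with s' hs'
  have hFt : F t ≤ hF.stieltjesFunction t := hF.stieltjesFunction_eq t ▸ hF.le_rightLim le_rfl
  have hFs : hF.stieltjesFunction s ≤ F s' := hF.stieltjesFunction_eq s ▸ hF.rightLim_le hs'.1
  linarith [h s' t hs'.2]

theorem map_restrict_Ioo_eq_measure (M : StieltjesFunction ℝ) {τ : ℝ → ℝ}
    (hτ : Measurable τ) {r₁ r₂ : ℝ} (hM : ∀ t, M t ∈ Icc r₁ r₂)
    (hτM : ∀ r ∈ Ioo r₁ r₂, ∀ t, τ r ≤ t ↔ r ≤ M t) :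
    (volume.restrict (Ioo r₁ r₂)).map τ = M.measure := by
  refine (M.measure.ext_of_Ioc _ fun s t _ => ?_).symm
  have hpre : τ ⁻¹' Ioc s t ∩ Ioo r₁ r₂ = Ioc (M s) (M t) ∩ Ioo r₁ r₂ := by
    ext r
    by_cases hr : r ∈ Ioo r₁ r₂
    · simp only [mem_inter_iff, mem_preimage, mem_Ioc, ← not_le, hτM r hr, hr]
    · simp [hr]
  rw [measure_Ioc, Measure.map_apply hτ measurableSet_Ioc,
    Measure.restrict_apply (hτ measurableSet_Ioc), hpre]
  refine le_antisymm ?_ ((measure_mono inter_subset_left).trans Real.volume_Ioc.le)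
  rw [← Real.volume_Ioo]
  exact measure_mono fun r hr =>
    ⟨Ioo_subset_Ioc_self hr, (hM s).1.trans_lt hr.1, hr.2.trans_le (hM t).2⟩

end StieltjesFunction

section RunningMax

variable {u : ℝ → ℝ} {a b r : ℝ}

def runningMax (u : ℝ → ℝ) (a b t : ℝ) : ℝ :=
  sSup (u '' Icc a (max a (min t b)))

/-- Adjoining `b` avoids the junk value `sInf ∅ = 0` and makes `hittingTime u a b` monotone. -/
def hittingTime (u : ℝ → ℝ) (a b r : ℝ) : ℝ :=
  sInf ({t ∈ Icc a b | r ≤ u t} ∪ {b})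

theorem max_min_mem_Icc (hab : a ≤ b) (t : ℝ) : max a (min t b) ∈ Icc a b :=
  ⟨le_max_left _ _, max_le hab (min_le_right _ _)⟩

theorem isCompact_image_Icc_max_min (hab : a ≤ b) (hu : ContinuousOn u (Icc a b)) (t : ℝ) :
    IsCompact (u '' Icc a (max a (min t b))) :=
  isCompact_Icc.image_of_continuousOn (hu.mono (Icc_subset_Icc_right (max_min_mem_Icc hab t).2))

theorem exists_eq_runningMax (hab : a ≤ b) (hu : ContinuousOn u (Icc a b)) (t : ℝ) :
    ∃ σ ∈ Icc a (max a (min t b)), u σ = runningMax u a b t :=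
  (isCompact_image_Icc_max_min hab hu t).sSup_mem ((nonempty_Icc.2 (le_max_left _ _)).image u)

theorem le_runningMax (hab : a ≤ b) (hu : ContinuousOn u (Icc a b)) {t σ : ℝ}
    (hσ : σ ∈ Icc a (max a (min t b))) : u σ ≤ runningMax u a b t :=
  le_csSup (isCompact_image_Icc_max_min hab hu t).bddAbove (mem_image_of_mem u hσ)

theorem runningMax_mono (hab : a ≤ b) (hu : ContinuousOn u (Icc a b)) :
    Monotone (runningMax u a b) := fun _ t hst =>
  csSup_le_csSup (isCompact_image_Icc_max_min hab hu t).bddAbove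
    ((nonempty_Icc.2 (le_max_left _ _)).image u)
    (image_mono (Icc_subset_Icc_right (max_le_max le_rfl (min_le_min_right b hst))))

theorem continuous_runningMax (hab : a ≤ b) (hu : ContinuousOn u (Icc a b)) :
    Continuous (runningMax u a b) := by
  -- a supremum over the fixed compact set `[a, b]`, so that `IsCompact.continuous_sSup` applies
  have hstop : ∀ t, runningMax u a b t =
      sSup ((fun s => u (max a (min s (max a (min t b))))) '' Icc a b) := by
    intro t
    have hx := max_min_mem_Icc hab t
    rw [runningMax, ← image_image u (fun s => max a (min s (max a (min t b))))]
    congr 2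
    ext σ
    refine ⟨fun hσ => ?_, fun ⟨_, _, hs⟩ =>
      hs ▸ ⟨le_max_left _ _, max_le hx.1 (min_le_right _ _)⟩⟩
    exact ⟨σ, ⟨hσ.1, hσ.2.trans hx.2⟩, by simp only [min_eq_left hσ.2, max_eq_right hσ.1]⟩
  rw [funext hstop]
  refine isCompact_Icc.continuous_sSup (hu.comp_continuous (by fun_prop) fun p => ?_)
  exact ⟨le_max_left _ _, max_le hab ((min_le_right _ _).trans (max_min_mem_Icc hab p.1).2)⟩

theorem runningMax_sub_le (hab : a ≤ b) (hu : ContinuousOn u (Icc a b)) {F : ℝ → ℝ}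
    (hF : MonotoneOn F (Icc a b))
    (hdom : ∀ s ∈ Icc a b, ∀ t ∈ Icc a b, s ≤ t → u t - u s ≤ F t - F s) {s t : ℝ}
    (hst : s ≤ t) :
    runningMax u a b t - runningMax u a b s ≤ F (max a (min t b)) - F (max a (min s b)) := by
  have hs := max_min_mem_Icc hab s
  have ht := max_min_mem_Icc hab t
  have hst' : max a (min s b) ≤ max a (min t b) := max_le_max le_rfl (min_le_min_right b hst)
  obtain ⟨σ, hσ, hσM⟩ := exists_eq_runningMax hab hu t
  rcases le_or_gt σ (max a (min s b)) with hσs | hsσ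
  · have : runningMax u a b t ≤ runningMax u a b s :=
      hσM ▸ le_runningMax hab hu ⟨hσ.1, hσs⟩
    linarith [hF hs ht hst']
  · have hσab : σ ∈ Icc a b := ⟨hσ.1, hσ.2.trans ht.2⟩
    have hus : u (max a (min s b)) ≤ runningMax u a b s := le_runningMax hab hu ⟨hs.1, le_rfl⟩
    linarith [hdom _ hs σ hσab hsσ.le, hF hσab ht hσ.2]

theorem bddBelow_hittingTime_set (hab : a ≤ b) :
    BddBelow ({t ∈ Icc a b | r ≤ u t} ∪ {b}) :=
  ⟨a, by rintro t (ht | rfl); exacts [ht.1.1, hab]⟩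

theorem hittingTime_le (hab : a ≤ b) {t : ℝ} (ht : t ∈ Icc a b) (hr : r ≤ u t) :
    hittingTime u a b r ≤ t :=
  csInf_le (bddBelow_hittingTime_set hab) (Or.inl ⟨ht, hr⟩)

theorem hittingTime_mono (hab : a ≤ b) : Monotone (hittingTime u a b) := fun _ _ hrr' =>
  csInf_le_csInf (bddBelow_hittingTime_set hab) ⟨b, Or.inr rfl⟩
    (union_subset_union_left _ fun _ ht => ⟨ht.1, hrr'.trans ht.2⟩)

theorem hittingTime_mem_Ioo_and_eq (hab : a ≤ b) (hu : ContinuousOn u (Icc a b))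
    (hr : r ∈ Ioo (u a) (u b)) :
    hittingTime u a b r ∈ Ioo a b ∧ u (hittingTime u a b r) = r := by
  set τ := hittingTime u a b r
  have hclosed : IsClosed ({t ∈ Icc a b | r ≤ u t} ∪ {b}) :=
    (hu.preimage_isClosed_of_isClosed isClosed_Icc isClosed_Ici).union isClosed_singleton
  obtain ⟨hτ, hrτ⟩ : τ ∈ Icc a b ∧ r ≤ u τ := by
    rcases hclosed.csInf_mem ⟨b, Or.inr rfl⟩ (bddBelow_hittingTime_set hab) with h | h
    · exact h
    · rw [show τ = b from mem_singleton_iff.1 h]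
      exact ⟨⟨hab, le_rfl⟩, hr.2.le⟩
  -- by the intermediate value theorem `u` takes the value `r` on `[a, τ]`, hence at `τ` itself
  obtain ⟨t₀, ht₀, hut₀⟩ :=
    intermediate_value_Icc hτ.1 (hu.mono (Icc_subset_Icc_right hτ.2)) ⟨hr.1.le, hrτ⟩
  have hτt₀ : τ = t₀ :=
    le_antisymm (hittingTime_le hab ⟨ht₀.1, ht₀.2.trans hτ.2⟩ hut₀.ge) ht₀.2
  subst hτt₀
  refine ⟨⟨hτ.1.lt_of_ne fun h => hr.1.ne (h ▸ hut₀), hτ.2.lt_of_ne fun h => ?_⟩, hut₀⟩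
  exact hr.2.ne' (h ▸ hut₀)

theorem hittingTime_le_iff (hab : a ≤ b) (hu : ContinuousOn u (Icc a b))
    (hr : r ∈ Ioo (u a) (u b)) (t : ℝ) :
    hittingTime u a b r ≤ t ↔ r ≤ runningMax u a b t := by
  obtain ⟨hτ, huτ⟩ := hittingTime_mem_Ioo_and_eq hab hu hr
  refine ⟨fun h => ?_, fun h => ?_⟩
  · exact huτ ▸ le_runningMax hab hu ⟨hτ.1.le, le_max_of_le_right (le_min h hτ.2.le)⟩
  obtain ⟨σ, hσ, hσM⟩ := exists_eq_runningMax hab hu t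
  have haσ : a < σ := hσ.1.lt_of_ne fun h' => (h' ▸ hr.1).not_ge (hσM ▸ h)
  have hσt : σ ≤ min t b := (le_max_iff.1 hσ.2).resolve_left haσ.not_ge
  exact (hittingTime_le hab ⟨hσ.1, hσt.trans (min_le_right _ _)⟩ (hσM ▸ h)).trans
    (hσt.trans (min_le_left _ _))

theorem map_hittingTime_le (hab : a ≤ b) (hu : ContinuousOn u (Icc a b))
    (hub : ∀ t ∈ Icc a b, u t ≤ u b) {F : ℝ → ℝ} (hF : Monotone F)
    (hdom : ∀ s t, s ≤ t → runningMax u a b t - runningMax u a b s ≤ F t - F s) :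
    (volume.restrict (Ioo (u a) (u b))).map (hittingTime u a b) ≤
      hF.stieltjesFunction.measure.restrict (Icc a b) := by
  have hτ : Measurable (hittingTime u a b) := (hittingTime_mono hab).measurable
  let M : StieltjesFunction ℝ := ⟨runningMax u a b, runningMax_mono hab hu,
    fun t => (continuous_runningMax hab hu).continuousWithinAt⟩
  have hM : ∀ t, M t ∈ Icc (u a) (u b) := fun t =>
    ⟨le_runningMax hab hu ⟨le_rfl, le_max_left _ _⟩,
      let ⟨σ, hσ, hσM⟩ := exists_eq_runningMax hab hu t
      hσM.symm.trans_le (hub σ ⟨hσ.1, hσ.2.trans (max_min_mem_Icc hab t).2⟩)⟩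
  have hτIcc : Ioo (u a) (u b) ⊆ hittingTime u a b ⁻¹' Icc a b := fun r hr =>
    Ioo_subset_Icc_self (hittingTime_mem_Ioo_and_eq hab hu hr).1
  have hsupp : (volume.restrict (Ioo (u a) (u b))).map (hittingTime u a b) =
      ((volume.restrict (Ioo (u a) (u b))).map (hittingTime u a b)).restrict (Icc a b) := by
    rw [Measure.restrict_map hτ measurableSet_Icc,
      Measure.restrict_restrict (hτ measurableSet_Icc), inter_eq_right.2 hτIcc]
  rw [hsupp, M.map_restrict_Ioo_eq_measure hτ hM fun r hr t => hittingTime_le_iff hab hu hr t]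
  exact Measure.restrict_mono subset_rfl (M.measure_le_stieltjesFunction_measure hF hdom)

end RunningMax

section Paths

variable {n : ℕ} {γ : ℝ → EuclideanSpace ℝ (Fin n)} {a b : ℝ}

theorem varFun_eq_variationOnFromTo (hab : a ≤ b) (t : ℝ) :
    varFun n γ a b t = variationOnFromTo γ (Icc a b) a (max a (min t b)) := by
  rw [variationOnFromTo.eq_of_le _ _ (le_max_left _ _),
    inter_eq_right.2 (Icc_subset_Icc_right (max_min_mem_Icc hab t).2)]
  rfl

theorem runningMax_sub_le_varFun (hab : a ≤ b) (hγc : ContinuousOn γ (Icc a b))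
    (hγ : BoundedVariationOn γ (Icc a b)) {φ : EuclideanSpace ℝ (Fin n) → ℝ}
    (hφ : LipschitzWith 1 φ) {s t : ℝ} (hst : s ≤ t) :
    runningMax (φ ∘ γ) a b t - runningMax (φ ∘ γ) a b s ≤
      varFun n γ a b t - varFun n γ a b s := by
  have hγ' := hγ.locallyBoundedVariationOn
  rw [varFun_eq_variationOnFromTo hab, varFun_eq_variationOnFromTo hab]
  refine runningMax_sub_le hab (hφ.continuous.comp_continuousOn hγc)
    (variationOnFromTo.monotoneOn hγ' ⟨le_rfl, hab⟩) (fun s hs t ht hst => ?_) hst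
  calc φ (γ t) - φ (γ s) ≤ dist (γ t) (γ s) := by
        have := hφ.le_add_mul (γ t) (γ s)
        rw [NNReal.coe_one, one_mul] at this
        linarith
    _ = dist (γ s) (γ t) := dist_comm _ _
    _ ≤ variationOnFromTo γ (Icc a b) s t := by
        rw [variationOnFromTo.eq_of_le _ _ hst]
        exact (hγ' s t hs ht).dist_le ⟨hs, le_rfl, hst⟩ ⟨ht, hst, le_rfl⟩
    _ = variationOnFromTo γ (Icc a b) a t - variationOnFromTo γ (Icc a b) a s :=
        (variationOnFromTo.sub_right hγ' ⟨le_rfl, hab⟩ ht hs).symm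

theorem lintegral_comp_hittingTime_le_arcIntegral (hab : a ≤ b)
    (hγ : ContinuousOn γ (Icc a b)) {φ : EuclideanSpace ℝ (Fin n) → ℝ} (hφ : LipschitzWith 1 φ)
    (hmax : ∀ t ∈ Icc a b, φ (γ t) ≤ φ (γ b)) {f : EuclideanSpace ℝ (Fin n) → ℝ≥0∞}
    (hf : Measurable f) :
    ∫⁻ r in Ioo (φ (γ a)) (φ (γ b)), f (γ (hittingTime (φ ∘ γ) a b r)) ≤
      arcIntegral n f γ a b := by
  unfold arcIntegral
  split_ifs with h
  · have hκ := map_hittingTime_le hab (hφ.continuous.comp_continuousOn hγ) hmax h.2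
      fun s t hst => runningMax_sub_le_varFun hab hγ h.1 hφ hst
    have hfγ : AEMeasurable (f ∘ γ) (h.2.stieltjesFunction.measure.restrict (Icc a b)) :=
      hf.comp_aemeasurable (hγ.aemeasurable measurableSet_Icc)
    calc _ = ∫⁻ t, f (γ t) ∂(volume.restrict (Ioo (φ (γ a)) (φ (γ b)))).map
          (hittingTime (φ ∘ γ) a b) :=
          (lintegral_map' (hfγ.mono_measure hκ)
            (hittingTime_mono hab).measurable.aemeasurable).symm
      _ ≤ _ := lintegral_mono' hκ le_rfl
  · exact le_top

end Paths

theorem measurableSet_annulus (n : ℕ) (y₀ : EuclideanSpace ℝ (Fin n)) (r₁ r₂ : ℝ) :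
    MeasurableSet (annulus n y₀ r₁ r₂) :=
  measurableSet_Ioo.preimage (measurable_id.dist measurable_const)

theorem measurable_radial (n : ℕ) (y₀ : EuclideanSpace ℝ (Fin n)) (r₁ r₂ : ℝ)
    {η : ℝ → ℝ≥0∞} (hη : Measurable η) :
    Measurable fun y => if y ∈ annulus n y₀ r₁ r₂ then η (dist y y₀) else 0 :=
  Measurable.ite (measurableSet_annulus n y₀ r₁ r₂)
    (hη.comp (measurable_id.dist measurable_const)) measurable_const

theorem lintegral_le_arcIntegral_of_mem_pathsBetween {n : ℕ} {y₀ : EuclideanSpace ℝ (Fin n)}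
    {r₁ r₂ : ℝ} {η : ℝ → ℝ≥0∞} (hη : Measurable η) {γ : PathOn n}
    (hγ : γ ∈ pathsBetween n (sphere y₀ r₁) (sphere y₀ r₂) (annulus n y₀ r₁ r₂)) :
    ∫⁻ r in Ioo r₁ r₂, η r ≤
      arcIntegral n (fun y => if y ∈ annulus n y₀ r₁ r₂ then η (dist y y₀) else 0)
        γ.toFun γ.a γ.b := by
  rcases le_or_gt r₂ r₁ with h21 | h12
  · simp [Ioo_eq_empty h21.not_gt]
  obtain ⟨ha, hb, hmid⟩ := hγ
  rw [mem_sphere] at ha hb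
  have hdist : ∀ t ∈ Icc γ.a γ.b, dist (γ.toFun t) y₀ ≤ r₂ := by
    intro t ht
    rcases ht.1.eq_or_lt with rfl | hat
    · exact ha.trans_le h12.le
    rcases ht.2.eq_or_lt with rfl | htb
    · exact hb.le
    · exact (hmid t ⟨hat, htb⟩).2.le
  have key := lintegral_comp_hittingTime_le_arcIntegral γ.hab γ.cont
    (LipschitzWith.dist_left y₀) (fun t ht => hb ▸ hdist t ht) (measurable_radial n y₀ r₁ r₂ hη)
  rw [ha, hb] at key
  refine le_trans (le_of_eq (setLIntegral_congr_fun measurableSet_Ioo fun r hr => ?_)) key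
  have hr' : r ∈ Ioo (dist (γ.toFun γ.a) y₀) (dist (γ.toFun γ.b) y₀) := by rwa [ha, hb]
  obtain ⟨hτ, hdτ⟩ := hittingTime_mem_Ioo_and_eq γ.hab
    ((LipschitzWith.dist_left y₀).continuous.comp_continuousOn γ.cont) hr'
  simp only [Function.comp_apply] at hdτ
  simp only [hmid _ hτ, if_true, hdτ]

theorem radial_function_is_admissible_general
    (n : ℕ)
    (y₀ : EuclideanSpace ℝ (Fin n)) (r₁ r₂ : ℝ)
    (η : ℝ → ℝ≥0∞) (hη : Measurable η)
    (hη1 : 1 ≤ ∫⁻ r in Set.Ioo r₁ r₂, η r)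
    (ρ : EuclideanSpace ℝ (Fin n) → ℝ≥0∞)
    (hρ : ∀ y, ρ y = if y ∈ annulus n y₀ r₁ r₂ then η (dist y y₀) else 0) :
    (∀ γ ∈ pathsBetween n (Metric.sphere y₀ r₁) (Metric.sphere y₀ r₂)
        (annulus n y₀ r₁ r₂),
      (∫⁻ r in Set.Ioo r₁ r₂, η r) ≤ arcIntegral n ρ γ.toFun γ.a γ.b) ∧
    IsAdmissibleFor n ρ
      (pathsBetween n (Metric.sphere y₀ r₁) (Metric.sphere y₀ r₂)
        (annulus n y₀ r₁ r₂)) := by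
  obtain rfl : ρ = fun y => if y ∈ annulus n y₀ r₁ r₂ then η (dist y y₀) else 0 :=
    funext hρ
  have hle := @lintegral_le_arcIntegral_of_mem_pathsBetween n y₀ r₁ r₂ η hη
  exact ⟨fun _ hγ => hle hγ, measurable_radial n y₀ r₁ r₂ hη,
    fun _ hγ => hη1.trans (hle hγ)⟩

/-- **Admissibility of the radial function (Väisälä's Theorem 5.7).** -/
theorem radial_function_is_admissible
    (n : ℕ) (hn : 2 ≤ n)
    (y₀ : EuclideanSpace ℝ (Fin n)) (r₁ r₂ : ℝ) (h1 : 0 < r₁) (h12 : r₁ < r₂)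
    (η : ℝ → ℝ≥0∞) (hη : Measurable η)
    (hη1 : 1 ≤ ∫⁻ r in Set.Ioo r₁ r₂, η r)
    (ρ : EuclideanSpace ℝ (Fin n) → ℝ≥0∞)
    (hρ : ∀ y, ρ y = if y ∈ annulus n y₀ r₁ r₂ then η (dist y y₀) else 0) :
    (∀ γ ∈ pathsBetween n (Metric.sphere y₀ r₁) (Metric.sphere y₀ r₂)
        (annulus n y₀ r₁ r₂),
      (∫⁻ r in Set.Ioo r₁ r₂, η r) ≤ arcIntegral n ρ γ.toFun γ.a γ.b) ∧
    IsAdmissibleFor n ρ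
      (pathsBetween n (Metric.sphere y₀ r₁) (Metric.sphere y₀ r₂)
        (annulus n y₀ r₁ r₂)) :=
  radial_function_is_admissible_general n y₀ r₁ r₂ η hη hη1 ρ hρ

end
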